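/- Let $\mu$ be a critical offspring distribution with finite variance $\sigma^2>0$ and $\mu(0)>0$, and let $\tau_*$ be a root-biased Bienaymé tree with offspring distribution $\mu$: the root has $k$ children with probability $(k+1)\mu(k+1)$, and given this, the subtrees above the children are i.i.d. Bienaymé trees with offspring distribution $\mu$. Then there exists a constant $c>0$ such that $\mathbb{P}(\#\tau_*\ge m)\le c\,m^{-1/2}$ for all $m>0$. -/

import Mathlib

set_option maxHeartbeats 1000000


inductive PlaneTree : Type where
  | node : List PlaneTree → PlaneTree

instance : MeasurableSpace PlaneTree := ⊤

namespace PlaneTree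

mutual
def size : PlaneTree → ℕ
  | .node ts => 1 + sizeF ts
def sizeF : List PlaneTree → ℕ
  | [] => 0
  | t :: ts => size t + sizeF ts
end

mutual
def height : PlaneTree → ℕ
  | .node ts => heightF ts
def heightF : List PlaneTree → ℕ
  | [] => 0
  | t :: ts => max (height t + 1) (heightF ts)
end

mutual
def maxDeg : PlaneTree → ℕ
  | .node ts => max ts.length (maxDegF ts)
def maxDegF : List PlaneTree → ℕ
  | [] => 0
  | t :: ts => max (maxDeg t) (maxDegF ts)
end

mutual
def treeProb (μ : ℕ → ℝ) : PlaneTree → ℝ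
  | .node ts => μ ts.length * forestProb μ ts
def forestProb (μ : ℕ → ℝ) : List PlaneTree → ℝ
  | [] => 1
  | t :: ts => treeProb μ t * forestProb μ ts
end

/-- Law of a root-biased Bienaymé tree. -/
def rootBiasedProb (μ : ℕ → ℝ) : PlaneTree → ℝ
  | .node ts => (ts.length + 1 : ℝ) * μ (ts.length + 1) * forestProb μ ts

/-- Root-preserving embedding of plane trees (ignoring the plane order). -/
inductive Embeds : PlaneTree → PlaneTree → Prop where
  | intro (ss ts : List PlaneTree) (f : Fin ss.length → Fin ts.length)
      (hinj : Function.Injective f)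
      (h : ∀ i, Embeds (ss.get i) (ts.get (f i))) :
      Embeds (.node ss) (.node ts)

/-- Maximum size of a common rooted subtree. -/
noncomputable def LCSr (t t' : PlaneTree) : ℕ :=
  sSup {n | ∃ s : PlaneTree, s.size = n ∧ s.Embeds t ∧ s.Embeds t'}

mutual
def enc : PlaneTree → ℕ
  | .node ts => encF ts
def encF : List PlaneTree → ℕ
  | [] => 0
  | t :: ts => Nat.pair (enc t) (encF ts) + 1
end

mutual
theorem enc_inj : ∀ t t' : PlaneTree, enc t = enc t' → t = t'
  | .node ts, .node ts', h => by
    rw [encF_inj ts ts' (by simpa [enc] using h)]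
theorem encF_inj : ∀ ts ts' : List PlaneTree, encF ts = encF ts' → ts = ts'
  | [], [], _ => rfl
  | [], t' :: ts', h => by simp [encF] at h
  | t :: ts, [], h => by simp [encF] at h
  | t :: ts, t' :: ts', h => by
    simp only [encF, Nat.add_right_cancel_iff] at h
    have h1 := congrArg Nat.unpair h
    simp [Nat.unpair_pair] at h1
    rw [enc_inj t t' h1.1, encF_inj ts ts' h1.2]
end

instance : Countable PlaneTree := ⟨enc, fun a b h => enc_inj a b h⟩


mutual
theorem treeProb_nonneg (μ : ℕ → ℝ) (hnn : ∀ k, 0 ≤ μ k) : ∀ t, 0 ≤ treeProb μ t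
  | .node ts => by
    rw [treeProb]
    exact mul_nonneg (hnn _) (forestProb_nonneg μ hnn ts)
theorem forestProb_nonneg (μ : ℕ → ℝ) (hnn : ∀ k, 0 ≤ μ k) : ∀ ts, 0 ≤ forestProb μ ts
  | [] => by rw [forestProb]; norm_num
  | t :: ts => by
    rw [forestProb]
    exact mul_nonneg (treeProb_nonneg μ hnn t) (forestProb_nonneg μ hnn ts)
end

theorem rootBiasedProb_nonneg (μ : ℕ → ℝ) (hnn : ∀ k, 0 ≤ μ k) (t : PlaneTree) :
    0 ≤ rootBiasedProb μ t := by
  obtain ⟨ts⟩ := t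
  rw [rootBiasedProb]
  exact mul_nonneg (mul_nonneg (by positivity) (hnn _)) (forestProb_nonneg μ hnn ts)

theorem one_le_size (t : PlaneTree) : 1 ≤ t.size := by
  obtain ⟨ts⟩ := t; rw [size]; omega

def nodeEquiv : List PlaneTree ≃ PlaneTree where
  toFun := node
  invFun t := match t with | .node ts => ts
  left_inv ts := rfl
  right_inv t := match t with | .node ts => rfl

open scoped ENNReal

/-- master summation lemma -/
theorem tsum_tree (h : PlaneTree → ℝ≥0∞) :
    ∑' t, h t = ∑' (k : ℕ), ∑' v : Fin k → PlaneTree, h (node (List.ofFn v)) := by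
  rw [← nodeEquiv.tsum_eq]
  show ∑' ts : List PlaneTree, h (node ts) = _
  rw [← List.equivSigmaTuple.symm.tsum_eq (fun ts => h (node ts))]
  rw [ENNReal.tsum_sigma']
  rfl

theorem tsum_pi_prod {X : Type*} (p : X → ℝ≥0∞) :
    ∀ k : ℕ, ∑' v : Fin k → X, ∏ i, p (v i) = (∑' x, p x) ^ k := by
  intro k
  induction k with
  | zero =>
    simp only [pow_zero, Finset.univ_eq_empty, Finset.prod_empty]
    exact tsum_eq_single (fun i => i.elim0) (fun b hb => (hb (Subsingleton.elim _ _)).elim)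
  | succ n ih =>
    calc ∑' v : Fin (n+1) → X, ∏ i, p (v i)
        = ∑' x : X × (Fin n → X), ∏ i, p ((Fin.cons x.1 x.2 : Fin (n+1) → X) i) :=
          ((Fin.consEquiv (fun _ : Fin (n+1) => X)).tsum_eq
            (fun v => ∏ i, p (v i))).symm
      _ = ∑' (a : X) (v : Fin n → X), p a * ∏ i, p (v i) := by
          rw [ENNReal.tsum_prod']
          refine tsum_congr fun a => tsum_congr fun v => ?_
          show ∏ i : Fin (n+1), p ((Fin.cons a v : Fin (n+1) → X) i) = _
          rw [Fin.prod_univ_succ, Fin.cons_zero]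
          simp only [Fin.cons_succ]
      _ = ∑' (a : X), p a * ∑' v : Fin n → X, ∏ i, p (v i) := by
          congr 1; ext a; rw [ENNReal.tsum_mul_left]
      _ = (∑' x, p x) ^ (n+1) := by
          rw [ih, ENNReal.tsum_mul_right, pow_succ, mul_comm]


noncomputable def ew (μ : ℕ → ℝ) (r : ℝ) (t : PlaneTree) : ℝ≥0∞ :=
  ENNReal.ofReal (treeProb μ t) * ENNReal.ofReal r ^ t.size

noncomputable def bw (μ : ℕ → ℝ) (r : ℝ) (t : PlaneTree) : ℝ≥0∞ :=
  ENNReal.ofReal (rootBiasedProb μ t) * ENNReal.ofReal r ^ t.size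

theorem map_ofFn_prod {k : ℕ} (f : PlaneTree → ℝ≥0∞) (v : Fin k → PlaneTree) :
    ((List.ofFn v).map f).prod = ∏ i, f (v i) := by
  rw [List.map_ofFn, List.prod_ofFn]
  rfl

variable {μ : ℕ → ℝ} {r : ℝ}

theorem forest_ew (hnn : ∀ k, 0 ≤ μ k) : ∀ ts : List PlaneTree,
    ENNReal.ofReal (forestProb μ ts) * ENNReal.ofReal r ^ sizeF ts
      = (ts.map (ew μ r)).prod
  | [] => by simp [forestProb, sizeF]
  | t :: ts => by
    rw [forestProb, sizeF, ENNReal.ofReal_mul (treeProb_nonneg μ hnn t), pow_add,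
      List.map_cons, List.prod_cons, ← forest_ew hnn ts, ew]
    ring

theorem ew_node (hnn : ∀ k, 0 ≤ μ k) (ts : List PlaneTree) :
    ew μ r (node ts)
      = ENNReal.ofReal (μ ts.length) * ENNReal.ofReal r * (ts.map (ew μ r)).prod := by
  rw [ew, treeProb, size, ENNReal.ofReal_mul (hnn _), pow_add, pow_one,
    mul_mul_mul_comm, forest_ew hnn]

theorem bw_node (hnn : ∀ k, 0 ≤ μ k) (ts : List PlaneTree) :
    bw μ r (node ts)
      = ENNReal.ofReal ((ts.length + 1 : ℝ) * μ (ts.length + 1)) * ENNReal.ofReal r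
          * (ts.map (ew μ r)).prod := by
  rw [bw, rootBiasedProb, size,
    ENNReal.ofReal_mul (mul_nonneg (by positivity) (hnn _)), pow_add, pow_one,
    mul_mul_mul_comm, forest_ew hnn]

theorem F_eq (hnn : ∀ k, 0 ≤ μ k) :
    ∑' t, ew μ r t
      = ENNReal.ofReal r * ∑' k : ℕ, ENNReal.ofReal (μ k) * (∑' t, ew μ r t) ^ k := by
  conv_lhs => rw [tsum_tree (ew μ r)]
  rw [← ENNReal.tsum_mul_left]
  refine tsum_congr fun k => ?_
  calc ∑' v : Fin k → PlaneTree, ew μ r (node (List.ofFn v))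
      = ∑' v : Fin k → PlaneTree,
          ENNReal.ofReal (μ k) * ENNReal.ofReal r * ∏ i, ew μ r (v i) := by
        refine tsum_congr fun v => ?_
        rw [ew_node hnn, List.length_ofFn, map_ofFn_prod]
    _ = ENNReal.ofReal r * (ENNReal.ofReal (μ k) * (∑' t, ew μ r t) ^ k) := by
        rw [ENNReal.tsum_mul_left, tsum_pi_prod]
        ring

theorem G_eq (hnn : ∀ k, 0 ≤ μ k) :
    ∑' t, bw μ r t
      = ENNReal.ofReal r
          * ∑' k : ℕ, ENNReal.ofReal ((k + 1 : ℝ) * μ (k + 1)) * (∑' t, ew μ r t) ^ k := by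
  conv_lhs => rw [tsum_tree (bw μ r)]
  rw [← ENNReal.tsum_mul_left]
  refine tsum_congr fun k => ?_
  calc ∑' v : Fin k → PlaneTree, bw μ r (node (List.ofFn v))
      = ∑' v : Fin k → PlaneTree,
          ENNReal.ofReal ((k + 1 : ℝ) * μ (k + 1)) * ENNReal.ofReal r
            * ∏ i, ew μ r (v i) := by
        refine tsum_congr fun v => ?_
        rw [bw_node hnn, List.length_ofFn, map_ofFn_prod]
    _ = ENNReal.ofReal r
          * (ENNReal.ofReal ((k + 1 : ℝ) * μ (k + 1)) * (∑' t, ew μ r t) ^ k) := by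
        rw [ENNReal.tsum_mul_left, tsum_pi_prod]
        ring

theorem size_le_sizeF : ∀ (ts : List PlaneTree), ∀ t ∈ ts, size t ≤ sizeF ts
  | t' :: ts, t, h => by
    rw [sizeF]
    rcases List.mem_cons.mp h with h | h
    · subst h; omega
    · have := size_le_sizeF ts t h; omega

noncomputable def ewc (μ : ℕ → ℝ) (r : ℝ) (N : ℕ) (t : PlaneTree) : ℝ≥0∞ :=
  if t.size ≤ N then ew μ r t else 0

theorem F_le_one (hnn : ∀ k, 0 ≤ μ k) (hμs : Summable μ) (hsum : ∑' k, μ k = 1)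
    (hr0 : 0 ≤ r) (hr1 : r ≤ 1) : ∑' t, ew μ r t ≤ 1 := by
  have hs1 : ENNReal.ofReal r ≤ 1 := by
    simpa using ENNReal.ofReal_le_ofReal hr1
  have hν : ∑' k : ℕ, ENNReal.ofReal (μ k) = 1 := by
    rw [← ENNReal.ofReal_tsum_of_nonneg hnn hμs, hsum, ENNReal.ofReal_one]
  have key : ∀ N, (∑' t, ewc μ r N t) ≤ 1 := by
    intro N
    induction N with
    | zero =>
      have h0 : ∀ t, ewc μ r 0 t = 0 := fun t =>
        if_neg (by have := one_le_size t; omega)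
      simp [h0]
    | succ N ih =>
      rw [tsum_tree (ewc μ r (N+1))]
      have hterm : ∀ (k : ℕ) (v : Fin k → PlaneTree),
          ewc μ r (N+1) (node (List.ofFn v))
            ≤ ENNReal.ofReal (μ k) * ENNReal.ofReal r * ∏ i, ewc μ r N (v i) := by
        intro k v
        by_cases h : (node (List.ofFn v)).size ≤ N + 1
        · have hmem : ∀ i, (v i).size ≤ N := by
            intro i
            have h1 := size_le_sizeF (List.ofFn v) (v i)
              (by rw [List.mem_ofFn]; exact Set.mem_range_self i)
            rw [size] at h
            omega
          have heq : ∏ i, ewc μ r N (v i) = ∏ i, ew μ r (v i) :=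
            Finset.prod_congr rfl fun i _ => if_pos (hmem i)
          rw [ewc, if_pos h, heq, ew_node hnn, List.length_ofFn, map_ofFn_prod]
        · rw [ewc, if_neg h]; exact zero_le
      calc ∑' (k : ℕ) (v : Fin k → PlaneTree), ewc μ r (N+1) (node (List.ofFn v))
          ≤ ∑' (k : ℕ) (v : Fin k → PlaneTree),
              ENNReal.ofReal (μ k) * ENNReal.ofReal r * ∏ i, ewc μ r N (v i) :=
            ENNReal.tsum_le_tsum fun k => ENNReal.tsum_le_tsum fun v => hterm k v
        _ = ∑' (k : ℕ), ENNReal.ofReal (μ k) * ENNReal.ofReal r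
              * (∑' t, ewc μ r N t) ^ k := by
            refine tsum_congr fun k => ?_
            rw [ENNReal.tsum_mul_left, tsum_pi_prod]
        _ ≤ ∑' (k : ℕ), ENNReal.ofReal (μ k) * 1 * 1 ^ k := by
            refine ENNReal.tsum_le_tsum fun k => ?_
            exact mul_le_mul' (mul_le_mul' le_rfl hs1) (pow_le_pow_left' ih k)
        _ = 1 := by simpa using hν
  rw [ENNReal.tsum_eq_iSup_sum]
  refine iSup_le fun S => ?_
  set N := S.sup size with hN
  calc ∑ t ∈ S, ew μ r t = ∑ t ∈ S, ewc μ r N t :=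
        Finset.sum_congr rfl fun t ht =>
          (if_pos (Finset.le_sup ht : size t ≤ N)).symm
    _ ≤ ∑' t, ewc μ r N t := ENNReal.sum_le_tsum S
    _ ≤ 1 := key N


end PlaneTree

-- elementary pointwise inequalities
theorem rbAux_pow_ineq1 {x : ℝ} (hx0 : 0 ≤ x) (hx1 : x ≤ 1) (k : ℕ) :
    0 ≤ x ^ k - 1 - k * (x - 1) := by
  have h : x ^ k - 1 = (∑ i ∈ Finset.range k, x ^ i) * (x - 1) := (geom_sum_mul x k).symm
  have hsum : ∑ i ∈ Finset.range k, x ^ i ≤ k := by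
    calc ∑ i ∈ Finset.range k, x ^ i ≤ ∑ i ∈ Finset.range k, 1 :=
          Finset.sum_le_sum fun i _ => pow_le_one₀ hx0 hx1
      _ = k := by simp
  nlinarith [hsum, sub_nonneg.2 hx1]

theorem rbAux_pow_ineq2 {x : ℝ} (hx0 : 0 ≤ x) (hx1 : x ≤ 1) {k : ℕ} (hk : 2 ≤ k) :
    (1 - x) ^ 2 ≤ x ^ k - 1 - k * (x - 1) := by
  have h : x ^ k - 1 = (∑ i ∈ Finset.range k, x ^ i) * (x - 1) := (geom_sum_mul x k).symm
  have hsum : ∑ i ∈ Finset.range k, x ^ i ≤ (k : ℝ) - 1 + x := by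
    have : ∑ i ∈ Finset.range k, x ^ i
        = x ^ 1 + ∑ i ∈ Finset.range k \ {1}, x ^ i := by
      rw [← Finset.sum_eq_add_sum_sdiff_singleton_of_mem
        (by simp [Finset.mem_range]; omega : 1 ∈ Finset.range k)]
    rw [this, pow_one]
    have : ∑ i ∈ Finset.range k \ {1}, x ^ i ≤ ∑ i ∈ Finset.range k \ {1}, 1 :=
      Finset.sum_le_sum fun i _ => pow_le_one₀ hx0 hx1
    have hcard : (Finset.range k \ {1}).card = k - 1 := by
      rw [Finset.card_sdiff_of_subset (by simp [Finset.singleton_subset_iff, Finset.mem_range]; omega)]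
      simp
    have hk1 : ((k : ℝ) - 1) = ((k - 1 : ℕ) : ℝ) := by
      push_cast [Nat.cast_sub (by omega : 1 ≤ k)]; ring
    calc x + ∑ i ∈ Finset.range k \ {1}, x ^ i
        ≤ x + ((k - 1 : ℕ) : ℝ) := by
          have := this
          simp only [Finset.sum_const, nsmul_eq_mul, mul_one, hcard] at this
          linarith
      _ = (k : ℝ) - 1 + x := by rw [hk1]; ring
  nlinarith [sub_nonneg.2 hx1]

theorem rbAux_one_sub_pow_le {x : ℝ} (hx0 : 0 ≤ x) (hx1 : x ≤ 1) (k : ℕ) :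
    1 - x ^ k ≤ k * (1 - x) := by
  have := rbAux_pow_ineq1 hx0 hx1 k
  nlinarith

theorem rbAux_summable_of_tsum_ne_zero {f : ℕ → ℝ} (h : ∑' k, f k ≠ 0) : Summable f := by
  by_contra hs
  rw [tsum_eq_zero_of_not_summable hs] at h
  exact h rfl

theorem rbAux_exists_k0 (μ : ℕ → ℝ) (hnn : ∀ k, 0 ≤ μ k) (hsum : ∑' k, μ k = 1)
    (hcrit : ∑' k : ℕ, (k : ℝ) * μ k = 1) (h0 : 0 < μ 0) :
    ∃ k₀, 2 ≤ k₀ ∧ 0 < μ k₀ := by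
  by_contra h
  push_neg at h
  have hz : ∀ k, 2 ≤ k → μ k = 0 := fun k hk => le_antisymm (h k hk) (hnn k)
  have h1 : ∑' k : ℕ, (k : ℝ) * μ k = ∑ k ∈ ({0, 1} : Finset ℕ), (k : ℝ) * μ k := by
    refine tsum_eq_sum fun k hk => ?_
    have : 2 ≤ k := by simp [Finset.mem_insert] at hk; omega
    rw [hz k this, mul_zero]
  have h2 : ∑' k : ℕ, μ k = ∑ k ∈ ({0, 1} : Finset ℕ), μ k := by
    refine tsum_eq_sum fun k hk => ?_
    have : 2 ≤ k := by simp [Finset.mem_insert] at hk; omega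
    exact hz k this
  rw [h1] at hcrit
  rw [h2] at hsum
  simp [Finset.sum_insert, Finset.mem_singleton] at hcrit hsum
  linarith

theorem rbAux_main (μ : ℕ → ℝ) (hnn : ∀ k, 0 ≤ μ k) (hsum : ∑' k, μ k = 1)
    (hcrit : ∑' k : ℕ, (k : ℝ) * μ k = 1)
    (σ2 : ℝ) (hvar : HasSum (fun k : ℕ => ((k : ℝ) - 1) ^ 2 * μ k) σ2)
    (h0 : 0 < μ 0) :
    ∃ c2 : ℝ, 0 < c2 ∧ c2 ≤ 1 ∧ ∀ r x : ℝ, 0 ≤ r → r ≤ 1 → 0 ≤ x → x ≤ 1 →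
      x = r * (∑' k : ℕ, μ k * x ^ k) →
      1 - r * (∑' k : ℕ, ((k : ℝ) + 1) * μ (k + 1) * x ^ k)
        ≤ (1 - r) + σ2 * Real.sqrt ((1 - r) / c2) := by
  obtain ⟨k₀, hk₀2, hk₀⟩ := rbAux_exists_k0 μ hnn hsum hcrit h0
  have hμs : Summable μ := rbAux_summable_of_tsum_ne_zero (by rw [hsum]; norm_num)
  have hks : Summable (fun k : ℕ => (k : ℝ) * μ k) :=
    rbAux_summable_of_tsum_ne_zero (by rw [hcrit]; norm_num)
  refine ⟨μ k₀, hk₀, ?_, ?_⟩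
  · calc μ k₀ ≤ ∑' k, μ k := Summable.le_tsum hμs k₀ fun j _ => hnn j
      _ = 1 := hsum
  intro r x hr0 hr1 hx0 hx1 hfix
  -- summability facts
  have hxk : Summable (fun k : ℕ => μ k * x ^ k) :=
    hμs.of_nonneg_of_le (fun k => mul_nonneg (hnn k) (pow_nonneg hx0 k))
      (fun k => mul_le_of_le_one_right (hnn k) (pow_le_one₀ hx0 hx1))
  set fx := ∑' k : ℕ, μ k * x ^ k with hfx
  have hfx1 : fx ≤ 1 := by
    rw [hfx, ← hsum]
    exact Summable.tsum_le_tsum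
      (fun k => mul_le_of_le_one_right (hnn k) (pow_le_one₀ hx0 hx1)) hxk hμs
  -- the quadratic lower bound on fx - x
  have hterm_eq : ∀ k : ℕ, μ k * (x ^ k - 1 - k * (x - 1))
      = μ k * x ^ k - μ k + (1 - x) * ((k : ℝ) * μ k) := fun k => by ring
  have hSsum : Summable (fun k : ℕ => μ k * (x ^ k - 1 - k * (x - 1))) := by
    simp_rw [hterm_eq]
    exact (hxk.sub hμs).add ((hks.mul_left (1 - x)))
  have hS_eq : ∑' k : ℕ, μ k * (x ^ k - 1 - k * (x - 1)) = fx - 1 + (1 - x) := by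
    simp_rw [hterm_eq]
    rw [Summable.tsum_add (hxk.sub hμs) (hks.mul_left (1 - x)), Summable.tsum_sub hxk hμs,
      tsum_mul_left, hsum, hcrit, mul_one]
  have hS_ge : μ k₀ * (1 - x) ^ 2 ≤ ∑' k : ℕ, μ k * (x ^ k - 1 - k * (x - 1)) := by
    calc μ k₀ * (1 - x) ^ 2 ≤ μ k₀ * (x ^ k₀ - 1 - k₀ * (x - 1)) :=
          mul_le_mul_of_nonneg_left (rbAux_pow_ineq2 hx0 hx1 hk₀2) hk₀.le
      _ ≤ ∑' k : ℕ, μ k * (x ^ k - 1 - k * (x - 1)) :=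
          Summable.le_tsum hSsum k₀ fun j _ => mul_nonneg (hnn j) (rbAux_pow_ineq1 hx0 hx1 j)
  have hquad : μ k₀ * (1 - x) ^ 2 ≤ 1 - r := by
    have h1 : x + μ k₀ * (1 - x) ^ 2 ≤ fx := by
      have := hS_ge
      rw [hS_eq] at this
      linarith
    have hfx0 : 0 ≤ fx := le_trans (by nlinarith [sq_nonneg (1 - x), hk₀]) h1
    nlinarith [mul_nonneg (sub_nonneg.2 hr1) (sub_nonneg.2 hfx1)]
  have hsqrt : 1 - x ≤ Real.sqrt ((1 - r) / μ k₀) := by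
    have h1 : (1 - x) ^ 2 ≤ (1 - r) / μ k₀ := by
      rw [le_div_iff₀ hk₀]
      linarith [hquad]
    calc 1 - x = Real.sqrt ((1 - x) ^ 2) := (Real.sqrt_sq (by linarith)).symm
      _ ≤ Real.sqrt ((1 - r) / μ k₀) := Real.sqrt_le_sqrt h1
  -- the derivative-type generating function
  have hshift0 : Summable (fun k : ℕ => ((k + 1 : ℕ) : ℝ) * μ (k + 1)) :=
    (summable_nat_add_iff 1).2 hks
  have hshift : Summable (fun k : ℕ => ((k : ℝ) + 1) * μ (k + 1)) := by
    refine hshift0.congr fun k => ?_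
    push_cast
    ring
  have hg1 : ∑' k : ℕ, ((k : ℝ) + 1) * μ (k + 1) = 1 := by
    have h1 := Summable.tsum_eq_zero_add hks
    simp only [Nat.cast_zero, zero_mul, zero_add] at h1
    rw [hcrit] at h1
    calc ∑' k : ℕ, ((k : ℝ) + 1) * μ (k + 1)
        = ∑' k : ℕ, ((k + 1 : ℕ) : ℝ) * μ (k + 1) :=
          tsum_congr fun k => by push_cast; ring
      _ = 1 := h1.symm
  have hc1 : ∀ k : ℕ, (0:ℝ) ≤ ((k : ℝ) + 1) * μ (k + 1) := fun k =>
    mul_nonneg (by positivity) (hnn _)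
  have hsg : Summable (fun k : ℕ => ((k : ℝ) + 1) * μ (k + 1) * x ^ k) := by
    exact hshift.of_nonneg_of_le
      (fun k => mul_nonneg (hc1 k) (pow_nonneg hx0 k))
      (fun k => mul_le_of_le_one_right (hc1 k) (pow_le_one₀ hx0 hx1))
  set gx := ∑' k : ℕ, ((k : ℝ) + 1) * μ (k + 1) * x ^ k with hgx
  have hgx1 : gx ≤ 1 := by
    calc gx ≤ ∑' k : ℕ, ((k : ℝ) + 1) * μ (k + 1) :=
          Summable.tsum_le_tsum
            (fun k => mul_le_of_le_one_right (hc1 k) (pow_le_one₀ hx0 hx1)) hsg hshift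
      _ = 1 := hg1
  -- second moment sum
  have hlin : Summable (fun j : ℕ => ((j : ℝ) - 1) * μ j) := by
    refine (hks.sub hμs).congr fun j => ?_
    ring
  have hlinsum : ∑' j : ℕ, ((j : ℝ) - 1) * μ j = 0 := by
    have : ∑' j : ℕ, ((j : ℝ) * μ j - μ j) = 0 := by
      rw [Summable.tsum_sub hks hμs, hcrit, hsum, sub_self]
    rw [← this]
    exact tsum_congr fun j => by ring
  have hquadsum : Summable (fun j : ℕ => ((j : ℝ) - 1) * (j : ℝ) * μ j) := by
    refine (hvar.summable.add hlin).congr fun j => ?_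
    ring
  have hq_eq : ∑' j : ℕ, ((j : ℝ) - 1) * (j : ℝ) * μ j = σ2 := by
    have h1 : ∑' j : ℕ, (((j : ℝ) - 1) ^ 2 * μ j + ((j : ℝ) - 1) * μ j)
        = σ2 + 0 := by
      rw [Summable.tsum_add hvar.summable hlin, hvar.tsum_eq, hlinsum]
    rw [← h1.trans (add_zero σ2)]
    exact tsum_congr fun j => by ring
  -- shifted second moment
  have hqs : Summable (fun k : ℕ => (k : ℝ) * ((k : ℝ) + 1) * μ (k + 1)) := by
    refine ((summable_nat_add_iff 1).2 hquadsum).congr fun k => ?_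
    push_cast
    ring
  have hqs_eq : ∑' k : ℕ, (k : ℝ) * ((k : ℝ) + 1) * μ (k + 1) = σ2 := by
    have h1 := Summable.tsum_eq_zero_add hquadsum
    rw [hq_eq] at h1
    simp only [Nat.cast_zero, zero_sub, zero_mul, mul_zero, zero_add] at h1
    calc ∑' k : ℕ, (k : ℝ) * ((k : ℝ) + 1) * μ (k + 1)
        = ∑' k : ℕ, (((k + 1 : ℕ) : ℝ) - 1) * ((k + 1 : ℕ) : ℝ) * μ (k + 1) :=
          tsum_congr fun k => by push_cast; ring
      _ = σ2 := h1.symm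
  -- 1 - gx ≤ σ2 (1 - x)
  have hone_sub_g : 1 - gx ≤ σ2 * (1 - x) := by
    have hdiff : 1 - gx
        = ∑' k : ℕ, (((k : ℝ) + 1) * μ (k + 1) - ((k : ℝ) + 1) * μ (k + 1) * x ^ k) := by
      rw [Summable.tsum_sub hshift hsg, hg1]
    have hbound : ∀ k : ℕ,
        ((k : ℝ) + 1) * μ (k + 1) - ((k : ℝ) + 1) * μ (k + 1) * x ^ k
          ≤ (1 - x) * ((k : ℝ) * ((k : ℝ) + 1) * μ (k + 1)) := by
      intro k
      have h1 : ((k : ℝ) + 1) * μ (k + 1) * (1 - x ^ k)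
          ≤ ((k : ℝ) + 1) * μ (k + 1) * ((k : ℝ) * (1 - x)) :=
        mul_le_mul_of_nonneg_left (rbAux_one_sub_pow_le hx0 hx1 k) (hc1 k)
      nlinarith [h1]
    rw [hdiff]
    calc ∑' k : ℕ, (((k : ℝ) + 1) * μ (k + 1) - ((k : ℝ) + 1) * μ (k + 1) * x ^ k)
        ≤ ∑' k : ℕ, (1 - x) * ((k : ℝ) * ((k : ℝ) + 1) * μ (k + 1)) :=
          Summable.tsum_le_tsum hbound (hshift.sub hsg) (hqs.mul_left (1 - x))
      _ = (1 - x) * σ2 := by rw [tsum_mul_left, hqs_eq]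
      _ = σ2 * (1 - x) := mul_comm _ _
  -- combine
  have hgx0 : 0 ≤ gx := by
    rw [hgx]
    exact tsum_nonneg fun k => mul_nonneg (hc1 k) (pow_nonneg hx0 k)
  have hfinal : 1 - r * gx ≤ (1 - r) + σ2 * (1 - x) := by
    nlinarith [mul_nonneg (sub_nonneg.2 hr1) hgx0]
  have hσ2 : 0 ≤ σ2 := hvar.tsum_eq ▸ tsum_nonneg fun k =>
    mul_nonneg (sq_nonneg _) (hnn k)
  calc 1 - r * gx ≤ (1 - r) + σ2 * (1 - x) := hfinal
    _ ≤ (1 - r) + σ2 * Real.sqrt ((1 - r) / μ k₀) := by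
        have := mul_le_mul_of_nonneg_left hsqrt hσ2
        linarith


open MeasureTheory ProbabilityTheory Filter
open scoped ENNReal

/-- Tail bound for the size of a root-biased Bienaymé tree with critical,
finite-variance offspring distribution. -/
theorem rootBiased_size_tail {Ω : Type*} [MeasureSpace Ω]
    [IsProbabilityMeasure (ℙ : Measure Ω)]
    (μ : ℕ → ℝ) (hnn : ∀ k, 0 ≤ μ k) (hsum : ∑' k : ℕ, μ k = 1)
    (hcrit : ∑' k : ℕ, (k : ℝ) * μ k = 1)
    (σ2 : ℝ) (hσpos : 0 < σ2)
    (hvar : HasSum (fun k : ℕ => ((k : ℝ) - 1) ^ 2 * μ k) σ2)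
    (h0 : 0 < μ 0)
    (τ : Ω → PlaneTree) (hτmeas : Measurable τ)
    (hlaw : ∀ t : PlaneTree,
      ℙ {ω | τ ω = t} = ENNReal.ofReal (PlaneTree.rootBiasedProb μ t)) :
    ∃ c : ℝ, 0 < c ∧ ∀ m : ℕ, 0 < m →
      ℙ {ω | m ≤ (τ ω).size} ≤ ENNReal.ofReal (c * (m : ℝ) ^ (-(1 / 2) : ℝ)) := by
  classical
  open PlaneTree in
  obtain ⟨c2, hc2pos, hc2le1, hkey⟩ := rbAux_main μ hnn hsum hcrit σ2 hvar h0
  have hμs : Summable μ := rbAux_summable_of_tsum_ne_zero (by rw [hsum]; norm_num)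
  have hdivnn : 0 ≤ σ2 / Real.sqrt c2 := div_nonneg hσpos.le (Real.sqrt_nonneg _)
  refine ⟨2 * (1 + σ2 / Real.sqrt c2), by linarith, fun m hm => ?_⟩
  -- measurability and law facts
  have hall : ∀ u : Set PlaneTree, MeasurableSet u := fun u =>
    MeasurableSpace.measurableSet_top
  have hsing : ∀ t : PlaneTree, MeasurableSet {ω | τ ω = t} := fun t =>
    hτmeas (hall {t})
  have hdisj : Pairwise (Function.onFun Disjoint fun t : PlaneTree => {ω | τ ω = t}) := by
    intro t t' htt'
    refine Set.disjoint_left.2 fun ω h1 h2 => htt' ?_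
    exact h1.symm.trans h2
  have htot : ∑' t : PlaneTree, ENNReal.ofReal (PlaneTree.rootBiasedProb μ t) = 1 := by
    have huniv : (⋃ t : PlaneTree, {ω | τ ω = t}) = Set.univ := by
      ext ω; simp
    calc ∑' t : PlaneTree, ENNReal.ofReal (PlaneTree.rootBiasedProb μ t)
        = ∑' t : PlaneTree, ℙ {ω | τ ω = t} := by
          exact (tsum_congr fun t => hlaw t).symm
      _ = ℙ (⋃ t : PlaneTree, {ω | τ ω = t}) := (measure_iUnion hdisj fun t => hsing t).symm
      _ = 1 := by rw [huniv]; exact measure_univ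
  -- the tail probability as a sum
  have hPtail : ℙ {ω | m ≤ (τ ω).size}
      = ∑' t : {t : PlaneTree // m ≤ t.size}, ENNReal.ofReal (PlaneTree.rootBiasedProb μ t) := by
    have hset : {ω | m ≤ (τ ω).size}
        = ⋃ t : {t : PlaneTree // m ≤ t.size}, {ω | τ ω = t.val} := by
      ext ω
      simp only [Set.mem_setOf_eq, Set.mem_iUnion]
      constructor
      · intro h; exact ⟨⟨τ ω, h⟩, rfl⟩
      · rintro ⟨⟨t, ht⟩, h⟩; rw [h]; exact ht
    rw [hset, measure_iUnion]
    · exact tsum_congr fun t => hlaw t.val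
    · intro t t' htt'
      refine Set.disjoint_left.2 fun ω h1 h2 => htt' ?_
      exact Subtype.ext (h1.symm.trans h2)
    · exact fun t => hsing t.val
  -- choose r
  set r : ℝ := 1 - 1 / m with hrdef
  have hm1 : (1 : ℝ) ≤ m := by exact_mod_cast hm
  have hmpos : (0 : ℝ) < m := by linarith
  have ha0 : 0 < 1 / (m : ℝ) := by positivity
  have ha1 : 1 / (m : ℝ) ≤ 1 := by
    rw [div_le_one hmpos]; exact hm1
  have hr0 : 0 ≤ r := by rw [hrdef]; linarith
  have hr1 : r ≤ 1 := by rw [hrdef]; linarith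
  -- generating functions
  set F : ℝ≥0∞ := ∑' t : PlaneTree, PlaneTree.ew μ r t with hFdef
  have hF1 : F ≤ 1 := PlaneTree.F_le_one hnn hμs hsum hr0 hr1
  have hFne : F ≠ ⊤ := ne_top_of_le_ne_top ENNReal.one_ne_top hF1
  set x : ℝ := F.toReal with hxdef
  have hx0 : 0 ≤ x := ENNReal.toReal_nonneg
  have hx1 : x ≤ 1 := by
    rw [hxdef, ← ENNReal.toReal_one]
    exact ENNReal.toReal_mono ENNReal.one_ne_top hF1
  have hFto : ∀ k : ℕ, (ENNReal.ofReal (μ k) * F ^ k).toReal = μ k * x ^ k := by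
    intro k
    rw [ENNReal.toReal_mul, ENNReal.toReal_pow, ENNReal.toReal_ofReal (hnn k)]
  have hxeq : x = r * ∑' k : ℕ, μ k * x ^ k := by
    have h1 := congrArg ENNReal.toReal (PlaneTree.F_eq hnn (μ := μ) (r := r))
    rw [← hFdef] at h1
    rw [ENNReal.toReal_mul, ENNReal.toReal_ofReal hr0] at h1
    rw [ENNReal.tsum_toReal_eq (fun k => ENNReal.mul_ne_top ENNReal.ofReal_ne_top
      (ENNReal.pow_ne_top hFne))] at h1
    calc x = F.toReal := hxdef
      _ = r * ∑' k : ℕ, (ENNReal.ofReal (μ k) * F ^ k).toReal := h1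
      _ = r * ∑' k : ℕ, μ k * x ^ k := by rw [tsum_congr hFto]
  set G : ℝ≥0∞ := ∑' t : PlaneTree, PlaneTree.bw μ r t with hGdef
  have hbw_le : ∀ t : PlaneTree,
      PlaneTree.bw μ r t ≤ ENNReal.ofReal (PlaneTree.rootBiasedProb μ t) := by
    intro t
    rw [PlaneTree.bw]
    calc ENNReal.ofReal (PlaneTree.rootBiasedProb μ t) * ENNReal.ofReal r ^ t.size
        ≤ ENNReal.ofReal (PlaneTree.rootBiasedProb μ t) * 1 := by
          refine mul_le_mul' le_rfl ?_
          refine pow_le_one' ?_ _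
          simpa using ENNReal.ofReal_le_ofReal hr1
      _ = _ := mul_one _
  have hG1 : G ≤ 1 := by
    rw [hGdef, ← htot]
    exact ENNReal.tsum_le_tsum hbw_le
  have hGne : G ≠ ⊤ := ne_top_of_le_ne_top ENNReal.one_ne_top hG1
  have hGto : G.toReal = r * ∑' k : ℕ, ((k : ℝ) + 1) * μ (k + 1) * x ^ k := by
    have h1 := congrArg ENNReal.toReal (PlaneTree.G_eq hnn (μ := μ) (r := r))
    rw [← hGdef, ← hFdef] at h1
    rw [ENNReal.toReal_mul, ENNReal.toReal_ofReal hr0] at h1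
    rw [ENNReal.tsum_toReal_eq (fun k => ENNReal.mul_ne_top ENNReal.ofReal_ne_top
      (ENNReal.pow_ne_top hFne))] at h1
    rw [h1]
    congr 1
    refine tsum_congr fun k => ?_
    rw [ENNReal.toReal_mul, ENNReal.toReal_pow,
      ENNReal.toReal_ofReal (mul_nonneg (by positivity) (hnn _))]
  -- analytic estimate
  have hana : 1 - G.toReal ≤ (1 - r) + σ2 * Real.sqrt ((1 - r) / c2) := by
    rw [hGto]
    exact hkey r x hr0 hr1 hx0 hx1 hxeq
  -- power bound : r ^ m ≤ 1/2
  have hrm : r ^ m ≤ 1 / 2 := by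
    have hber : (2 : ℝ) ≤ (1 + 1 / m) ^ m := by
      have := one_add_mul_le_pow (a := 1 / (m : ℝ)) (by linarith) m
      have hma : (m : ℝ) * (1 / m) = 1 := by field_simp
      calc (2 : ℝ) = 1 + (m : ℝ) * (1 / m) := by rw [hma]; norm_num
        _ ≤ (1 + 1 / m) ^ m := this
    have hprod : r ^ m * (1 + 1 / m) ^ m ≤ 1 := by
      rw [← mul_pow]
      refine pow_le_one₀ ?_ ?_
      · nlinarith
      · nlinarith
    have hrmnn : 0 ≤ r ^ m := pow_nonneg hr0 m
    nlinarith
  have h1rm : (1 : ℝ) / 2 ≤ 1 - r ^ m := by linarith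
  -- main chain
  have hstep : ENNReal.ofReal (1 - r ^ m) * ℙ {ω | m ≤ (τ ω).size} ≤ 1 - G := by
    have hterm : ∀ t : PlaneTree, m ≤ t.size →
        ENNReal.ofReal (1 - r ^ m) * ENNReal.ofReal (PlaneTree.rootBiasedProb μ t)
          ≤ ENNReal.ofReal (PlaneTree.rootBiasedProb μ t) - PlaneTree.bw μ r t := by
      intro t ht
      have hrBP := PlaneTree.rootBiasedProb_nonneg μ hnn t
      have hpow : r ^ t.size ≤ r ^ m := pow_le_pow_of_le_one hr0 hr1 ht
      have h2 : (1 - r ^ m) * PlaneTree.rootBiasedProb μ t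
          ≤ PlaneTree.rootBiasedProb μ t - PlaneTree.rootBiasedProb μ t * r ^ t.size := by
        nlinarith [pow_nonneg hr0 m]
      calc ENNReal.ofReal (1 - r ^ m) * ENNReal.ofReal (PlaneTree.rootBiasedProb μ t)
          = ENNReal.ofReal ((1 - r ^ m) * PlaneTree.rootBiasedProb μ t) :=
            (ENNReal.ofReal_mul (by linarith)).symm
        _ ≤ ENNReal.ofReal (PlaneTree.rootBiasedProb μ t
              - PlaneTree.rootBiasedProb μ t * r ^ t.size) :=
            ENNReal.ofReal_le_ofReal h2
        _ = ENNReal.ofReal (PlaneTree.rootBiasedProb μ t)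
              - ENNReal.ofReal (PlaneTree.rootBiasedProb μ t * r ^ t.size) :=
            ENNReal.ofReal_sub _ (mul_nonneg hrBP (pow_nonneg hr0 _))
        _ = ENNReal.ofReal (PlaneTree.rootBiasedProb μ t) - PlaneTree.bw μ r t := by
            rw [PlaneTree.bw, ENNReal.ofReal_mul hrBP, ENNReal.ofReal_pow hr0]
    have hd_eq : ∑' t : PlaneTree,
        (ENNReal.ofReal (PlaneTree.rootBiasedProb μ t) - PlaneTree.bw μ r t) = 1 - G := by
      refine ENNReal.eq_sub_of_add_eq hGne ?_
      rw [hGdef, ← ENNReal.tsum_add]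
      rw [← htot]
      exact tsum_congr fun t => tsub_add_cancel_of_le (hbw_le t)
    calc ENNReal.ofReal (1 - r ^ m) * ℙ {ω | m ≤ (τ ω).size}
        = ∑' t : {t : PlaneTree // m ≤ t.size},
            ENNReal.ofReal (1 - r ^ m) * ENNReal.ofReal (PlaneTree.rootBiasedProb μ t) := by
          rw [hPtail, ENNReal.tsum_mul_left]
      _ ≤ ∑' t : {t : PlaneTree // m ≤ t.size},
            (ENNReal.ofReal (PlaneTree.rootBiasedProb μ t.val) - PlaneTree.bw μ r t.val) :=
          ENNReal.tsum_le_tsum fun t => hterm t.val t.prop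
      _ ≤ ∑' t : PlaneTree,
            (ENNReal.ofReal (PlaneTree.rootBiasedProb μ t) - PlaneTree.bw μ r t) :=
          le_trans
            (le_of_eq (tsum_subtype {t : PlaneTree | m ≤ t.size}
              (fun t => ENNReal.ofReal (PlaneTree.rootBiasedProb μ t) - PlaneTree.bw μ r t)))
            (ENNReal.tsum_le_tsum fun t => Set.indicator_le_self _ _ t)
      _ = 1 - G := hd_eq
  have hone_sub_G : (1 : ℝ≥0∞) - G = ENNReal.ofReal (1 - G.toReal) := by
    conv_lhs => rw [← ENNReal.ofReal_toReal hGne, ← ENNReal.ofReal_one]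
    rw [ENNReal.ofReal_sub _ ENNReal.toReal_nonneg]
  -- half bound
  have hhalf : ENNReal.ofReal (1 / 2) * ℙ {ω | m ≤ (τ ω).size}
      ≤ ENNReal.ofReal ((1 - r) + σ2 * Real.sqrt ((1 - r) / c2)) := by
    calc ENNReal.ofReal (1 / 2) * ℙ {ω | m ≤ (τ ω).size}
        ≤ ENNReal.ofReal (1 - r ^ m) * ℙ {ω | m ≤ (τ ω).size} :=
          mul_le_mul' (ENNReal.ofReal_le_ofReal h1rm) le_rfl
      _ ≤ 1 - G := hstep
      _ = ENNReal.ofReal (1 - G.toReal) := hone_sub_G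
      _ ≤ _ := ENNReal.ofReal_le_ofReal hana
  -- final numeric comparison
  have hsqm : Real.sqrt (m : ℝ) ≤ (m : ℝ) := by
    have h := Real.sqrt_le_sqrt (show (m : ℝ) ≤ (m : ℝ) ^ 2 by nlinarith)
    rwa [Real.sqrt_sq hmpos.le] at h
  have hsqmpos : 0 < Real.sqrt (m : ℝ) := Real.sqrt_pos.2 hmpos
  have hrpow : ((m : ℝ) ^ (-(1 / 2) : ℝ)) = 1 / Real.sqrt (m : ℝ) := by
    rw [Real.rpow_neg hmpos.le, ← Real.sqrt_eq_rpow, one_div]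
  have hfinnum : (1 - r) + σ2 * Real.sqrt ((1 - r) / c2)
      ≤ (1 + σ2 / Real.sqrt c2) * (1 / Real.sqrt (m : ℝ)) := by
    have h1r : 1 - r = 1 / m := by rw [hrdef]; ring
    have hsq : Real.sqrt ((1 - r) / c2) = (1 / Real.sqrt (m : ℝ)) / Real.sqrt c2 := by
      rw [h1r, Real.sqrt_div (by positivity) c2, one_div, one_div, Real.sqrt_inv]
    have h2 : (1 : ℝ) / m ≤ 1 / Real.sqrt (m : ℝ) :=
      one_div_le_one_div_of_le hsqmpos hsqm
    rw [hsq, h1r]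
    have h4 : σ2 * ((1 / Real.sqrt (m : ℝ)) / Real.sqrt c2)
        = (σ2 / Real.sqrt c2) * (1 / Real.sqrt (m : ℝ)) := by ring
    rw [h4]
    nlinarith [h2]
  calc ℙ {ω | m ≤ (τ ω).size}
      = ENNReal.ofReal 2 * (ENNReal.ofReal (1 / 2) * ℙ {ω | m ≤ (τ ω).size}) := by
        rw [← mul_assoc, ← ENNReal.ofReal_mul (by norm_num)]
        norm_num
    _ ≤ ENNReal.ofReal 2
          * ENNReal.ofReal ((1 - r) + σ2 * Real.sqrt ((1 - r) / c2)) :=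
        mul_le_mul' le_rfl hhalf
    _ = ENNReal.ofReal (2 * ((1 - r) + σ2 * Real.sqrt ((1 - r) / c2))) :=
        (ENNReal.ofReal_mul (by norm_num)).symm
    _ ≤ ENNReal.ofReal (2 * (1 + σ2 / Real.sqrt c2) * (m : ℝ) ^ (-(1 / 2) : ℝ)) := by
        refine ENNReal.ofReal_le_ofReal ?_
        rw [hrpow]
        nlinarith [hfinnum]
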